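/- Let f : Fin M → ℝ^N with indices partitioned into K pairwise disjoint pools I_1, …, I_K, each of cardinality L, and let P_∞ : ℝ^N → ℝ^K be the max-pooling operator (P_∞ x)_k = max_{j∈I_k} |⟨x, f_j⟩|. Then for all x, x' ∈ ℝ^N, d(x,x') · (inf over pairs of attained switches s, s' of A(s,s')) ≤ ‖P_∞(x) − P_∞(x')‖₂, where A(s,s') = ( min_{Ω ⊆ J(s,s')} [λ₋({f_{s_k}}_{k∈Ω})² + λ₋({f_{s_k}}_{k∈J(s,s')∖Ω})²] + (1/(4L)) · min_{Ω ⊆ J(s,s')ᶜ} [Λ_{s,s',Ω}² + Λ_{s,s',J(s,s')ᶜ∖Ω}²] )^{1/2}. -/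

import Mathlib

/-!
Let `s`, `t` be switches attained by `x`, `x'`, so that `(P x)_k = |a_k|` and `(P x')_k = |b_k|` with
`a_k = ⟪x, f (s k)⟫` and `b_k = ⟪x', f (t k)⟫`, and `(|a_k| - |b_k|)² = min ((a_k - b_k)², (a_k + b_k)²)`.
Split the pools according to which of the two is smaller. On pools with `s k = t k` the terms are
`⟪x ∓ x', f (s k)⟫²`, which the lower frame bound controls by `d(x, x')²`. On the other pools, write
`U`, `V` for the restricted measurement vectors of `x`, `x'`: the cone condition gives
`λ₋² ‖x‖² ≤ L ‖U‖²` (and likewise for `x'`), and `‖U ± V‖²` is at least `sin² β` times both `‖U‖²`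
and `‖V‖²`; together with `d² ≤ 2‖x‖² + 2‖x'‖²` this yields the weight `1 / (4L)`.
-/

open scoped BigOperators RealInnerProductSpace
open Finset

noncomputable section

/-- Lower frame bound of the subfamily of `g` indexed by the finset `Ω`. -/
def lowerFrameBound {N : ℕ} {ι : Type*} (g : ι → EuclideanSpace ℝ (Fin N))
    (Ω : Finset ι) : ℝ :=
  sSup {c : ℝ | 0 ≤ c ∧ ∀ x : EuclideanSpace ℝ (Fin N),
    c * ‖x‖ ≤ Real.sqrt (∑ i ∈ Ω, ⟪x, g i⟫ ^ 2)}

/-- Sign-invariant distance `d(x,x') = min(‖x−x'‖, ‖x+x'‖)`. -/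
def sdist {N : ℕ} (x x' : EuclideanSpace ℝ (Fin N)) : ℝ :=
  min ‖x - x'‖ ‖x + x'‖

/-- A switch assigns to each pool an index of that pool. -/
def IsSwitch {M K : ℕ} (I : Fin K → Finset (Fin M)) (s : Fin K → Fin M) : Prop :=
  ∀ k, s k ∈ I k

/-- The cone of a switch `s`: signals whose pool-wise maximal absolute responses are
attained at the indices `s_k`. -/
def cone {N M K : ℕ} (f : Fin M → EuclideanSpace ℝ (Fin N))
    (I : Fin K → Finset (Fin M)) (s : Fin K → Fin M) : Set (EuclideanSpace ℝ (Fin N)) :=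
  {x | ∀ k, ∀ j ∈ I k, |⟪x, f j⟫| ≤ |⟪x, f (s k)⟫|}

/-- The acute angle `θ(u,v) = arccos(|⟨u,v⟩|/(‖u‖·‖v‖))`. -/
def theta {H : Type*} [NormedAddCommGroup H] [InnerProductSpace ℝ H] (u v : H) : ℝ :=
  Real.arccos (|⟪u, v⟫| / (‖u‖ * ‖v‖))

/-- The `Ω`-restricted switch measurement map `x ↦ (⟨x, g k⟩)_{k ∈ Ω}`. -/
def restrMap {N K : ℕ} (g : Fin K → EuclideanSpace ℝ (Fin N)) (Ω : Finset (Fin K))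
    (x : EuclideanSpace ℝ (Fin N)) : EuclideanSpace ℝ Ω :=
  WithLp.toLp 2 (fun k : Ω => ⟪x, g k⟫)

/-- `β(s,s',Ω)`: infimum of the angles between nonzero vectors in the images of the
cones of `s` and `s'` under the `Ω`-restricted switch measurement maps. -/
def beta {N M K : ℕ} (f : Fin M → EuclideanSpace ℝ (Fin N))
    (I : Fin K → Finset (Fin M)) (s s' : Fin K → Fin M) (Ω : Finset (Fin K)) : ℝ :=
  sInf {t : ℝ | ∃ u v : EuclideanSpace ℝ Ω, u ≠ 0 ∧ v ≠ 0 ∧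
    (∃ x ∈ cone f I s, u = restrMap (fun k => f (s k)) Ω x) ∧
    (∃ x' ∈ cone f I s', v = restrMap (fun k => f (s' k)) Ω x') ∧
    t = theta u v}

/-- `Λ_{s,s',Ω} = λ₋(F_{⋃_{k∈Ω} I_k}) · sin β(s,s',Ω)`. -/
def Lam {N M K : ℕ} (f : Fin M → EuclideanSpace ℝ (Fin N))
    (I : Fin K → Finset (Fin M)) (s s' : Fin K → Fin M) (Ω : Finset (Fin K)) : ℝ :=
  lowerFrameBound f (Ω.biUnion I) * Real.sin (beta f I s s' Ω)

/-- `J(s,s') = {k : s_k = s'_k}`. -/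
def Jset {M K : ℕ} (s s' : Fin K → Fin M) : Finset (Fin K) :=
  univ.filter fun k => s k = s' k

/-- The constant `A(s,s')` of Proposition `mpooling_prop`. -/
def Aconst {N M K : ℕ} (L : ℕ) (f : Fin M → EuclideanSpace ℝ (Fin N))
    (I : Fin K → Finset (Fin M)) (s s' : Fin K → Fin M) : ℝ :=
  Real.sqrt (
    sInf {r : ℝ | ∃ Ω ⊆ Jset s s',
        r = lowerFrameBound (fun k => f (s k)) Ω ^ 2 +
            lowerFrameBound (fun k => f (s k)) (Jset s s' \ Ω) ^ 2} +
    (1 / (4 * (L : ℝ))) *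
      sInf {r : ℝ | ∃ Ω ⊆ (Jset s s')ᶜ,
        r = Lam f I s s' Ω ^ 2 + Lam f I s s' ((Jset s s')ᶜ \ Ω) ^ 2})

/-- The max-pooling operator `(P_∞ x)_k = max_{j∈I_k} |⟨x, f_j⟩|`. -/
def maxPool {N M K : ℕ} (f : Fin M → EuclideanSpace ℝ (Fin N))
    (I : Fin K → Finset (Fin M)) (hne : ∀ k, (I k).Nonempty)
    (x : EuclideanSpace ℝ (Fin N)) : Fin K → ℝ :=
  fun k => (I k).sup' (hne k) fun j => |⟪x, f j⟫|

section LowerFrameBound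

variable {N : ℕ} {ι : Type*} (g : ι → EuclideanSpace ℝ (Fin N)) (Ω : Finset ι)

lemma lowerFrameBound_nonneg : 0 ≤ lowerFrameBound g Ω :=
  Real.sSup_nonneg fun _ hc => hc.1

lemma lowerFrameBound_mul_norm_le (x : EuclideanSpace ℝ (Fin N)) :
    lowerFrameBound g Ω * ‖x‖ ≤ √(∑ i ∈ Ω, ⟪x, g i⟫ ^ 2) := by
  rcases (norm_nonneg x).eq_or_lt with hx | hx
  · rw [← hx, mul_zero]
    exact Real.sqrt_nonneg _
  · rw [← le_div_iff₀ hx]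
    refine csSup_le ⟨0, le_rfl, fun y => by simp⟩ fun c hc => ?_
    exact (le_div_iff₀ hx).mpr (hc.2 x)

lemma lowerFrameBound_sq_mul_norm_sq_le (x : EuclideanSpace ℝ (Fin N)) :
    lowerFrameBound g Ω ^ 2 * ‖x‖ ^ 2 ≤ ∑ i ∈ Ω, ⟪x, g i⟫ ^ 2 := by
  rw [← mul_pow, ← Real.sq_sqrt (by positivity : 0 ≤ ∑ i ∈ Ω, ⟪x, g i⟫ ^ 2)]
  gcongr
  · exact mul_nonneg (lowerFrameBound_nonneg g Ω) (norm_nonneg x)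
  · exact lowerFrameBound_mul_norm_le g Ω x

end LowerFrameBound

section Sdist

variable {N : ℕ} (x x' : EuclideanSpace ℝ (Fin N))

lemma sdist_nonneg : 0 ≤ sdist x x' :=
  le_min (norm_nonneg _) (norm_nonneg _)

lemma sdist_neg_right : sdist x (-x') = sdist x x' := by
  rw [sdist, sdist, sub_neg_eq_add, ← sub_eq_add_neg, min_comm]

lemma sdist_sq_le : sdist x x' ^ 2 ≤ 2 * ‖x‖ ^ 2 + 2 * ‖x'‖ ^ 2 := by
  have h : sdist x x' ≤ ‖x‖ + ‖x'‖ := (min_le_right _ _).trans (norm_add_le x x')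
  nlinarith [sdist_nonneg x x', sq_nonneg (‖x‖ - ‖x'‖)]

variable {ι : Type*} (g : ι → EuclideanSpace ℝ (Fin N)) (Ω : Finset ι)

lemma sdist_sq_mul_lowerFrameBound_sq_le_sub :
    sdist x x' ^ 2 * lowerFrameBound g Ω ^ 2 ≤ ∑ i ∈ Ω, (⟪x, g i⟫ - ⟪x', g i⟫) ^ 2 := by
  simp_rw [← inner_sub_left]
  calc sdist x x' ^ 2 * lowerFrameBound g Ω ^ 2
      ≤ ‖x - x'‖ ^ 2 * lowerFrameBound g Ω ^ 2 := by
        gcongr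
        exacts [sdist_nonneg x x', min_le_left _ _]
    _ ≤ _ := by rw [mul_comm]; exact lowerFrameBound_sq_mul_norm_sq_le g Ω _

lemma sdist_sq_mul_lowerFrameBound_sq_le_add :
    sdist x x' ^ 2 * lowerFrameBound g Ω ^ 2 ≤ ∑ i ∈ Ω, (⟪x, g i⟫ + ⟪x', g i⟫) ^ 2 := by
  simpa [sdist_neg_right, inner_neg_left, ← sub_eq_add_neg] using
    sdist_sq_mul_lowerFrameBound_sq_le_sub x (-x') g Ω

end Sdist

section Theta

variable {H : Type*} [NormedAddCommGroup H] [InnerProductSpace ℝ H] (u v : H)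

lemma theta_comm : theta u v = theta v u := by
  rw [theta, theta, real_inner_comm, mul_comm]

lemma theta_nonneg : 0 ≤ theta u v := Real.arccos_nonneg _

lemma theta_le_pi_div_two : theta u v ≤ Real.pi / 2 :=
  Real.arccos_le_pi_div_two.mpr (by positivity)

lemma sin_theta_sq : Real.sin (theta u v) ^ 2 = 1 - (|⟪u, v⟫| / (‖u‖ * ‖v‖)) ^ 2 := by
  rw [theta, Real.sin_arccos, Real.sq_sqrt (sub_nonneg.mpr (pow_le_one₀ (by positivity) ?_))]
  exact div_le_one_of_le₀ (abs_real_inner_le_norm u v) (by positivity)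

/-- `‖u‖ sin θ(u, v)` is the distance from `u` to the line `ℝ v`. -/
lemma norm_sq_mul_sin_theta_sq_le : ‖u‖ ^ 2 * Real.sin (theta u v) ^ 2 ≤ ‖u + v‖ ^ 2 := by
  rw [sin_theta_sq, norm_add_sq_real]
  rcases eq_or_ne u 0 with rfl | hu
  · simp
  rcases eq_or_ne v 0 with rfl | hv
  · simp
  have hu' : 0 < ‖u‖ := norm_pos_iff.mpr hu
  have hv' : 0 < ‖v‖ := norm_pos_iff.mpr hv
  have key : ‖u‖ ^ 2 * (1 - (|⟪u, v⟫| / (‖u‖ * ‖v‖)) ^ 2) + (⟪u, v⟫ / ‖v‖ + ‖v‖) ^ 2 =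
      ‖u‖ ^ 2 + 2 * ⟪u, v⟫ + ‖v‖ ^ 2 := by
    rw [div_pow, sq_abs]
    field_simp
    ring
  nlinarith [sq_nonneg (⟪u, v⟫ / ‖v‖ + ‖v‖)]

end Theta

section Pooling

variable {N M K : ℕ} (f : Fin M → EuclideanSpace ℝ (Fin N)) (I : Fin K → Finset (Fin M))

lemma norm_restrMap_sq (g : Fin K → EuclideanSpace ℝ (Fin N)) (W : Finset (Fin K))
    (x : EuclideanSpace ℝ (Fin N)) : ‖restrMap g W x‖ ^ 2 = ∑ k ∈ W, ⟪x, g k⟫ ^ 2 := by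
  rw [EuclideanSpace.norm_sq_eq, ← Finset.sum_coe_sort W]
  simp [restrMap]

lemma norm_restrMap_add_sq (g g' : Fin K → EuclideanSpace ℝ (Fin N)) (W : Finset (Fin K))
    (x x' : EuclideanSpace ℝ (Fin N)) :
    ‖restrMap g W x + restrMap g' W x'‖ ^ 2 = ∑ k ∈ W, (⟪x, g k⟫ + ⟪x', g' k⟫) ^ 2 := by
  rw [EuclideanSpace.norm_sq_eq, ← Finset.sum_coe_sort W]
  simp [restrMap]

lemma neg_mem_cone {s : Fin K → Fin M} {x : EuclideanSpace ℝ (Fin N)} (hx : x ∈ cone f I s) :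
    -x ∈ cone f I s := by
  simpa [cone, inner_neg_left] using hx

lemma exists_switch_maxPool (hne : ∀ k, (I k).Nonempty) (x : EuclideanSpace ℝ (Fin N)) :
    ∃ s, IsSwitch I s ∧ x ∈ cone f I s ∧ ∀ k, maxPool f I hne x k = |⟪x, f (s k)⟫| := by
  choose s hs hmax using fun k => (I k).exists_max_image (fun j => |⟪x, f j⟫|) (hne k)
  exact ⟨s, hs, hmax, fun k =>
    le_antisymm (Finset.sup'_le _ _ (hmax k)) (Finset.le_sup' (fun j => |⟪x, f j⟫|) (hs k))⟩

lemma lowerFrameBound_biUnion_sq_mul_norm_sq_le {L : ℕ}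
    (hdisj : ∀ k k', k ≠ k' → Disjoint (I k) (I k')) (hcard : ∀ k, (I k).card ≤ L)
    {t : Fin K → Fin M} {y : EuclideanSpace ℝ (Fin N)} (hy : y ∈ cone f I t)
    (W : Finset (Fin K)) :
    lowerFrameBound f (W.biUnion I) ^ 2 * ‖y‖ ^ 2 ≤ L * ∑ k ∈ W, ⟪y, f (t k)⟫ ^ 2 := by
  have hpool : ∀ k, ∑ j ∈ I k, ⟪y, f j⟫ ^ 2 ≤ L * ⟪y, f (t k)⟫ ^ 2 := fun k => by
    calc ∑ j ∈ I k, ⟪y, f j⟫ ^ 2 ≤ (I k).card • ⟪y, f (t k)⟫ ^ 2 :=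
          Finset.sum_le_card_nsmul _ _ _ fun j hj => sq_le_sq.mpr (hy k j hj)
      _ ≤ L * ⟪y, f (t k)⟫ ^ 2 := by
          rw [nsmul_eq_mul]
          gcongr
          exact_mod_cast hcard k
  calc lowerFrameBound f (W.biUnion I) ^ 2 * ‖y‖ ^ 2
      ≤ ∑ j ∈ W.biUnion I, ⟪y, f j⟫ ^ 2 := lowerFrameBound_sq_mul_norm_sq_le f _ y
    _ = ∑ k ∈ W, ∑ j ∈ I k, ⟪y, f j⟫ ^ 2 :=
        Finset.sum_biUnion fun k _ k' _ hkk' => hdisj k k' hkk'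
    _ ≤ L * ∑ k ∈ W, ⟪y, f (t k)⟫ ^ 2 := by
        rw [Finset.mul_sum]
        exact Finset.sum_le_sum fun k _ => hpool k

end Pooling

section Unmatched

variable {N M K : ℕ} (f : Fin M → EuclideanSpace ℝ (Fin N)) (I : Fin K → Finset (Fin M))
  {s t : Fin K → Fin M} {x x' : EuclideanSpace ℝ (Fin N)}

lemma sin_beta_sq_le (hx : x ∈ cone f I s) (hx' : x' ∈ cone f I t) (W : Finset (Fin K)) :
    Real.sin (beta f I s t W) ^ 2 ≤
      Real.sin (theta (restrMap (fun k => f (s k)) W x) (restrMap (fun k => f (t k)) W x')) ^ 2 := by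
  set U := restrMap (fun k => f (s k)) W x
  set V := restrMap (fun k => f (t k)) W x'
  by_cases hUV : U = 0 ∨ V = 0
  · have hθ : theta U V = Real.pi / 2 := by rcases hUV with h | h <;> simp [theta, h]
    rw [hθ, Real.sin_pi_div_two, one_pow]
    exact Real.sin_sq_le_one _
  push Not at hUV
  obtain ⟨S, hβ, hmem, hlb⟩ : ∃ S : Set ℝ, beta f I s t W = sInf S ∧ theta U V ∈ S ∧
      ∀ r ∈ S, 0 ≤ r :=
    ⟨_, rfl, ⟨U, V, hUV.1, hUV.2, ⟨x, hx, rfl⟩, ⟨x', hx', rfl⟩, rfl⟩,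
      by rintro r ⟨u, v, -, -, -, -, rfl⟩; exact theta_nonneg u v⟩
  have hβ0 : 0 ≤ beta f I s t W := hβ ▸ le_csInf ⟨_, hmem⟩ hlb
  have hβθ : beta f I s t W ≤ theta U V := hβ ▸ csInf_le ⟨0, hlb⟩ hmem
  have hθ := theta_le_pi_div_two U V
  have hsin : Real.sin (beta f I s t W) ≤ Real.sin (theta U V) :=
    Real.sin_le_sin_of_le_of_le_pi_div_two (by linarith [Real.pi_pos]) hθ hβθ
  exact pow_le_pow_left₀ (Real.sin_nonneg_of_nonneg_of_le_pi hβ0 (by linarith [Real.pi_pos])) hsin 2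

lemma sdist_sq_mul_Lam_sq_le_add {L : ℕ}
    (hdisj : ∀ k k', k ≠ k' → Disjoint (I k) (I k')) (hcard : ∀ k, (I k).card ≤ L)
    (hx : x ∈ cone f I s) (hx' : x' ∈ cone f I t) (W : Finset (Fin K)) :
    sdist x x' ^ 2 * Lam f I s t W ^ 2 ≤ 4 * L * ∑ k ∈ W, (⟪x, f (s k)⟫ + ⟪x', f (t k)⟫) ^ 2 := by
  set U := restrMap (fun k => f (s k)) W x
  set V := restrMap (fun k => f (t k)) W x'
  set lam := lowerFrameBound f (W.biUnion I)
  set σ := Real.sin (theta U V) ^ 2 with hσ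
  have hxU : lam ^ 2 * ‖x‖ ^ 2 ≤ L * ‖U‖ ^ 2 := by
    rw [norm_restrMap_sq]; exact lowerFrameBound_biUnion_sq_mul_norm_sq_le f I hdisj hcard hx W
  have hxV : lam ^ 2 * ‖x'‖ ^ 2 ≤ L * ‖V‖ ^ 2 := by
    rw [norm_restrMap_sq]; exact lowerFrameBound_biUnion_sq_mul_norm_sq_le f I hdisj hcard hx' W
  have hU : ‖U‖ ^ 2 * σ ≤ ‖U + V‖ ^ 2 := norm_sq_mul_sin_theta_sq_le U V
  have hV : ‖V‖ ^ 2 * σ ≤ ‖U + V‖ ^ 2 := by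
    rw [hσ, theta_comm, add_comm]; exact norm_sq_mul_sin_theta_sq_le V U
  rw [← norm_restrMap_add_sq]
  calc sdist x x' ^ 2 * Lam f I s t W ^ 2
      = sdist x x' ^ 2 * lam ^ 2 * Real.sin (beta f I s t W) ^ 2 := by rw [Lam, mul_pow, mul_assoc]
    _ ≤ (2 * ‖x‖ ^ 2 + 2 * ‖x'‖ ^ 2) * lam ^ 2 * σ := by
        gcongr
        exacts [sdist_sq_le x x', sin_beta_sq_le f I hx hx' W]
    _ = 2 * σ * (lam ^ 2 * ‖x‖ ^ 2) + 2 * σ * (lam ^ 2 * ‖x'‖ ^ 2) := by ring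
    _ ≤ 2 * σ * (L * ‖U‖ ^ 2) + 2 * σ * (L * ‖V‖ ^ 2) := by gcongr
    _ = 2 * L * (‖U‖ ^ 2 * σ + ‖V‖ ^ 2 * σ) := by ring
    _ ≤ 4 * L * ‖U + V‖ ^ 2 := by nlinarith [(Nat.cast_nonneg L : (0 : ℝ) ≤ L)]

lemma sdist_sq_mul_Lam_sq_le_sub {L : ℕ}
    (hdisj : ∀ k k', k ≠ k' → Disjoint (I k) (I k')) (hcard : ∀ k, (I k).card ≤ L)
    (hx : x ∈ cone f I s) (hx' : x' ∈ cone f I t) (W : Finset (Fin K)) :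
    sdist x x' ^ 2 * Lam f I s t W ^ 2 ≤ 4 * L * ∑ k ∈ W, (⟪x, f (s k)⟫ - ⟪x', f (t k)⟫) ^ 2 := by
  simpa [sdist_neg_right, inner_neg_left, ← sub_eq_add_neg] using
    sdist_sq_mul_Lam_sq_le_add f I hdisj hcard hx (neg_mem_cone f I hx') W

end Unmatched

section SignSplit

lemma sq_abs_sub_abs (a b : ℝ) : (|a| - |b|) ^ 2 = min ((a - b) ^ 2) ((a + b) ^ 2) := by
  rcases le_total 0 (a * b) with hab | hab
  · rw [min_eq_left (by nlinarith)]
    nlinarith [sq_abs a, sq_abs b, abs_mul a b, abs_of_nonneg hab]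
  · rw [min_eq_right (by nlinarith)]
    nlinarith [sq_abs a, sq_abs b, abs_mul a b, abs_of_nonpos hab]

variable {α : Type*} [DecidableEq α]

lemma sum_sq_abs_sub_abs_eq (W : Finset α) (a b : α → ℝ) :
    ∑ k ∈ W, (|a k| - |b k|) ^ 2 =
      ∑ k ∈ W with (a k - b k) ^ 2 ≤ (a k + b k) ^ 2, (a k - b k) ^ 2 +
      ∑ k ∈ W \ {k ∈ W | (a k - b k) ^ 2 ≤ (a k + b k) ^ 2}, (a k + b k) ^ 2 := by
  rw [← Finset.filter_not, ← Finset.sum_filter_add_sum_filter_not W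
    (fun k => (a k - b k) ^ 2 ≤ (a k + b k) ^ 2)]
  congr 1 <;> refine Finset.sum_congr rfl fun k hk => ?_ <;> rw [sq_abs_sub_abs]
  · exact min_eq_left (Finset.mem_filter.mp hk).2
  · exact min_eq_right (le_of_not_ge (Finset.mem_filter.mp hk).2)

lemma mul_sInf_split_le (W : Finset α) (h : Finset α → ℝ) (a b : α → ℝ) {c m : ℝ} (hc : 0 ≤ c)
    (hsub : ∀ Ω ⊆ W, c * h Ω ^ 2 ≤ m * ∑ k ∈ Ω, (a k - b k) ^ 2)
    (hadd : ∀ Ω ⊆ W, c * h Ω ^ 2 ≤ m * ∑ k ∈ Ω, (a k + b k) ^ 2) :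
    c * sInf {r | ∃ Ω ⊆ W, r = h Ω ^ 2 + h (W \ Ω) ^ 2} ≤
      m * ∑ k ∈ W, (|a k| - |b k|) ^ 2 := by
  set Ω := {k ∈ W | (a k - b k) ^ 2 ≤ (a k + b k) ^ 2}
  have hΩ : Ω ⊆ W := Finset.filter_subset _ _
  calc c * sInf {r | ∃ Ω ⊆ W, r = h Ω ^ 2 + h (W \ Ω) ^ 2}
      ≤ c * (h Ω ^ 2 + h (W \ Ω) ^ 2) := by
        gcongr
        exact csInf_le ⟨0, by rintro _ ⟨_, -, rfl⟩; positivity⟩ ⟨Ω, hΩ, rfl⟩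
    _ = c * h Ω ^ 2 + c * h (W \ Ω) ^ 2 := mul_add _ _ _
    _ ≤ m * ∑ k ∈ Ω, (a k - b k) ^ 2 + m * ∑ k ∈ W \ Ω, (a k + b k) ^ 2 :=
        add_le_add (hsub Ω hΩ) (hadd _ Finset.sdiff_subset)
    _ = m * ∑ k ∈ W, (|a k| - |b k|) ^ 2 := by rw [sum_sq_abs_sub_abs_eq, mul_add]

end SignSplit

lemma mem_Jset {M K : ℕ} {s t : Fin K → Fin M} {k : Fin K} : k ∈ Jset s t ↔ s k = t k := by
  simp [Jset]

lemma sdist_mul_Aconst_le {N M K L : ℕ} (f : Fin M → EuclideanSpace ℝ (Fin N))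
    (I : Fin K → Finset (Fin M))
    (hdisj : ∀ k k', k ≠ k' → Disjoint (I k) (I k')) (hcard : ∀ k, (I k).card ≤ L)
    {s t : Fin K → Fin M} {x x' : EuclideanSpace ℝ (Fin N)}
    (hx : x ∈ cone f I s) (hx' : x' ∈ cone f I t) :
    sdist x x' * Aconst L f I s t ≤ √(∑ k, (|⟪x, f (s k)⟫| - |⟪x', f (t k)⟫|) ^ 2) := by
  set J := Jset s t
  set D := fun k => (|⟪x, f (s k)⟫| - |⟪x', f (t k)⟫|) ^ 2
  have hmatched : sdist x x' ^ 2 * sInf {r | ∃ Ω ⊆ J,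
      r = lowerFrameBound (fun k => f (s k)) Ω ^ 2 +
        lowerFrameBound (fun k => f (s k)) (J \ Ω) ^ 2} ≤ 1 * ∑ k ∈ J, D k := by
    have ht : ∀ Ω ⊆ J, ∀ k ∈ Ω, t k = s k := fun Ω hΩ k hk => (mem_Jset.mp (hΩ hk)).symm
    refine mul_sInf_split_le J _ _ _ (sq_nonneg _) (fun Ω hΩ => ?_) (fun Ω hΩ => ?_) <;>
      rw [one_mul, Finset.sum_congr rfl fun k hk => by rw [ht Ω hΩ k hk]]
    exacts [sdist_sq_mul_lowerFrameBound_sq_le_sub x x' _ Ω,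
      sdist_sq_mul_lowerFrameBound_sq_le_add x x' _ Ω]
  have hunmatched : sdist x x' ^ 2 * sInf {r | ∃ Ω ⊆ Jᶜ,
      r = Lam f I s t Ω ^ 2 + Lam f I s t (Jᶜ \ Ω) ^ 2} ≤ 4 * L * ∑ k ∈ Jᶜ, D k :=
    mul_sInf_split_le Jᶜ _ _ _ (sq_nonneg _)
      (fun Ω _ => sdist_sq_mul_Lam_sq_le_sub f I hdisj hcard hx hx' Ω)
      (fun Ω _ => sdist_sq_mul_Lam_sq_le_add f I hdisj hcard hx hx' Ω)
  rw [Aconst, ← Real.sqrt_sq (sdist_nonneg x x'), ← Real.sqrt_mul (sq_nonneg _)]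
  gcongr
  calc _ = sdist x x' ^ 2 * sInf {r | ∃ Ω ⊆ J,
          r = lowerFrameBound (fun k => f (s k)) Ω ^ 2 +
            lowerFrameBound (fun k => f (s k)) (J \ Ω) ^ 2} +
        sdist x x' ^ 2 * sInf {r | ∃ Ω ⊆ Jᶜ,
          r = Lam f I s t Ω ^ 2 + Lam f I s t (Jᶜ \ Ω) ^ 2} / (4 * L) := by ring
    _ ≤ ∑ k ∈ J, D k + ∑ k ∈ Jᶜ, D k := add_le_add (by simpa using hmatched)
        (div_le_of_le_mul₀ (by positivity) (Finset.sum_nonneg fun k _ => sq_nonneg _)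
          (hunmatched.trans_eq (mul_comm _ _)))
    _ = ∑ k, D k := Finset.sum_add_sum_compl J D

theorem maxPool_lower_lipschitz_general {N M K L : ℕ} (f : Fin M → EuclideanSpace ℝ (Fin N))
    (I : Fin K → Finset (Fin M))
    (hdisj : ∀ k k', k ≠ k' → Disjoint (I k) (I k'))
    (hcard : ∀ k, (I k).card = L)
    (hne : ∀ k, (I k).Nonempty) :
    ∀ x x' : EuclideanSpace ℝ (Fin N),
      sdist x x' *
        sInf {a : ℝ | ∃ s s' : Fin K → Fin M,
          IsSwitch I s ∧ IsSwitch I s' ∧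
          (∃ y, y ∈ cone f I s) ∧ (∃ y', y' ∈ cone f I s') ∧
          a = Aconst L f I s s'}
      ≤ Real.sqrt (∑ k, (maxPool f I hne x k - maxPool f I hne x' k) ^ 2) := by
  intro x x'
  obtain ⟨s, hs, hxs, hPx⟩ := exists_switch_maxPool f I hne x
  obtain ⟨t, ht, hx't, hPx'⟩ := exists_switch_maxPool f I hne x'
  simp only [hPx, hPx']
  calc sdist x x' * sInf _ ≤ sdist x x' * Aconst L f I s t := by
        refine mul_le_mul_of_nonneg_left (csInf_le ?_ ⟨s, t, hs, ht, ⟨x, hxs⟩, ⟨x', hx't⟩, rfl⟩)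
          (sdist_nonneg x x')
        exact ⟨0, by rintro _ ⟨_, _, -, -, -, -, rfl⟩; exact Real.sqrt_nonneg _⟩
    _ ≤ _ := sdist_mul_Aconst_le f I hdisj (fun k => (hcard k).le) hxs hx't

/-- lower Lipschitz bound for the max-pooling operator. -/
theorem maxPool_lower_lipschitz {N M K L : ℕ} (f : Fin M → EuclideanSpace ℝ (Fin N))
    (I : Fin K → Finset (Fin M)) (hL : 0 < L)
    (hdisj : ∀ k k', k ≠ k' → Disjoint (I k) (I k'))
    (hcard : ∀ k, (I k).card = L)
    (hcover : ∀ j : Fin M, ∃ k, j ∈ I k)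
    (hne : ∀ k, (I k).Nonempty) :
    ∀ x x' : EuclideanSpace ℝ (Fin N),
      sdist x x' *
        sInf {a : ℝ | ∃ s s' : Fin K → Fin M,
          IsSwitch I s ∧ IsSwitch I s' ∧
          (∃ y, y ∈ cone f I s) ∧ (∃ y', y' ∈ cone f I s') ∧
          a = Aconst L f I s s'}
      ≤ Real.sqrt (∑ k, (maxPool f I hne x k - maxPool f I hne x' k) ^ 2) :=
  maxPool_lower_lipschitz_general f I hdisj hcard hne
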